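/- arXiv:2601.20231 — 2 statements merged into one kernel-verified Lean document; each statement's English description precedes it below -/
import Mathlib

section
/- Regret of the recommended point: any index î attaining the maximum of μ_i − r_i over 1 ≤ i ≤ N satisfies f(x_î) ≥ ℓ, and consequently f(x_î) ≥ f* − (2β + L·η), where β = max_{1≤i≤N} r_i and η = sup_{x ∈ A} min_{1≤i≤N} d(x, x_i). -/
/-- Lipschitz UCB envelope `U(x) = min_i (μ_i + r_i + L·d(x, x_i))`. -/
noncomputable def lipUCB {X : Type*} [MetricSpace X] {N : ℕ}
    (L : ℝ) (xs : Fin N → X) (μ r : Fin N → ℝ) (x : X) : ℝ :=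
  ⨅ i, (μ i + r i + L * dist x (xs i))

/-- Lower certificate `ℓ = max_i (μ_i − r_i)`. -/
noncomputable def lowerCert {N : ℕ} (μ r : Fin N → ℝ) : ℝ :=
  ⨆ i, (μ i - r i)

/-- Active set `A = {x : U(x) ≥ ℓ}`. -/
noncomputable def activeSet {X : Type*} [MetricSpace X] {N : ℕ}
    (L : ℝ) (xs : Fin N → X) (μ r : Fin N → ℝ) : Set X :=
  {x : X | lowerCert μ r ≤ lipUCB L xs μ r x}

/-!
The maximiser `î` of the lower confidence bounds satisfies `f(x_î) ≥ μ_î − r_î = ℓ`. On the good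
event `f ≤ U` everywhere, so `f* ≥ ℓ` puts `x*` in the active set; hence some sample `x_i` lies
within `η` of `x*`, and `f* ≤ f(x_i) + Lη ≤ μ_i + r_i + Lη ≤ ℓ + 2 r_i + Lη`.
-/

open Set

section LipschitzUCB

variable {X : Type*} {N : ℕ} {L : ℝ} {f : X → ℝ} {xs : Fin N → X} {μ r : Fin N → ℝ}

lemma sub_le_lowerCert (i : Fin N) : μ i - r i ≤ lowerCert μ r :=
  le_ciSup (f := fun j => μ j - r j) (finite_range _).bddAbove i

lemma lowerCert_eq_of_forall_le {i : Fin N} (hi : ∀ j, μ j - r j ≤ μ i - r i) :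
    lowerCert μ r = μ i - r i :=
  have : Nonempty (Fin N) := ⟨i⟩
  le_antisymm (ciSup_le hi) (sub_le_lowerCert i)

lemma lowerCert_le_of_forall_le {i : Fin N} (hgood : |μ i - f (xs i)| ≤ r i)
    (hi : ∀ j, μ j - r j ≤ μ i - r i) : lowerCert μ r ≤ f (xs i) := by
  rw [lowerCert_eq_of_forall_le hi]
  linarith [(abs_le.mp hgood).2]

variable [MetricSpace X]

lemma le_lipUCB [Nonempty (Fin N)] (hf : ∀ x y, |f x - f y| ≤ L * dist x y)
    (hgood : ∀ i, |μ i - f (xs i)| ≤ r i) (x : X) : f x ≤ lipUCB L xs μ r x :=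
  le_ciInf fun i => by
    linarith [(abs_le.mp (hf x (xs i))).2, (abs_le.mp (hgood i)).1]

lemma mem_activeSet_of_lowerCert_le [Nonempty (Fin N)]
    (hf : ∀ x y, |f x - f y| ≤ L * dist x y) (hgood : ∀ i, |μ i - f (xs i)| ≤ r i) {x : X}
    (hx : lowerCert μ r ≤ f x) : x ∈ activeSet L xs μ r :=
  hx.trans (le_lipUCB hf hgood x)

lemma le_lowerCert_add (hf : ∀ x y, |f x - f y| ≤ L * dist x y) {i : Fin N}
    (hgood : |μ i - f (xs i)| ≤ r i) (x : X) :
    f x ≤ lowerCert μ r + 2 * r i + L * dist x (xs i) := by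
  linarith [(abs_le.mp (hf x (xs i))).2, (abs_le.mp hgood).1, sub_le_lowerCert (μ := μ) (r := r) i]

lemma exists_dist_le_of_mem_upperBounds [Nonempty (Fin N)] {s : Set X} {η : ℝ}
    (hη : η ∈ upperBounds ((fun x => ⨅ i, dist x (xs i)) '' s)) {x : X} (hx : x ∈ s) :
    ∃ i, dist x (xs i) ≤ η := by
  obtain ⟨i, hi⟩ := exists_eq_ciInf_of_finite (f := fun i => dist x (xs i))
  exact ⟨i, hi ▸ hη (mem_image_of_mem _ hx)⟩

end LipschitzUCB

theorem recommended_point_regret_general {X : Type*} [MetricSpace X]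
    {L : ℝ} (hL : 0 ≤ L) {f : X → ℝ}
    (hf : ∀ x y, |f x - f y| ≤ L * dist x y)
    {N : ℕ} (xs : Fin N → X) (μ r : Fin N → ℝ)
    (hgood : ∀ i, |μ i - f (xs i)| ≤ r i)
    (xstar : X) (hopt : ∀ y : X, f y ≤ f xstar)
    (β : ℝ) (hβ : β = ⨆ i, r i)
    (η : ℝ)
    (hη : IsLUB ((fun x => ⨅ i, dist x (xs i)) '' activeSet L xs μ r) η)
    (ihat : Fin N) (hihat : ∀ j, μ j - r j ≤ μ ihat - r ihat) :
    lowerCert μ r ≤ f (xs ihat) ∧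
    f xstar - (2 * β + L * η) ≤ f (xs ihat) := by
  have : Nonempty (Fin N) := ⟨ihat⟩
  have hcert := lowerCert_le_of_forall_le (hgood ihat) hihat
  refine ⟨hcert, ?_⟩
  have hstar : xstar ∈ activeSet L xs μ r :=
    mem_activeSet_of_lowerCert_le hf hgood (hcert.trans (hopt _))
  obtain ⟨i, hi⟩ := exists_dist_le_of_mem_upperBounds hη.1 hstar
  have hri : r i ≤ β := hβ ▸ le_ciSup (finite_range r).bddAbove i
  have hLi : L * dist xstar (xs i) ≤ L * η := mul_le_mul_of_nonneg_left hi hL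
  linarith [le_lowerCert_add hf (hgood i) xstar]

/-- Regret of the recommended point: any index `î` attaining the maximum of
`μ_i − r_i` satisfies `f(x_î) ≥ ℓ`, hence `f(x_î) ≥ f* − (2β + Lη)`. -/
theorem recommended_point_regret {X : Type*} [MetricSpace X]
    {L : ℝ} (hL : 0 ≤ L) {f : X → ℝ}
    (hf : ∀ x y, |f x - f y| ≤ L * dist x y)
    {N : ℕ} (hN : 1 ≤ N) (xs : Fin N → X) (μ r : Fin N → ℝ)
    (hr : ∀ i, 0 ≤ r i)
    (hgood : ∀ i, |μ i - f (xs i)| ≤ r i)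
    (xstar : X) (hopt : ∀ y : X, f y ≤ f xstar)
    (β : ℝ) (hβ : β = ⨆ i, r i)
    (η : ℝ)
    (hη : IsLUB ((fun x => ⨅ i, dist x (xs i)) '' activeSet L xs μ r) η)
    (ihat : Fin N) (hihat : ∀ j, μ j - r j ≤ μ ihat - r ihat) :
    lowerCert μ r ≤ f (xs ihat) ∧
    f xstar - (2 * β + L * η) ≤ f (xs ihat) :=
  recommended_point_regret_general hL hf xs μ r hgood xstar hopt β hβ η hη ihat hihat
end

section
/- ε-optimality condition: fix ε > 0, and suppose β ≤ ε/6, η ≤ ε/(6L) (with L > 0), and γ ≤ ε/3, where β = max_{1≤i≤N} r_i, η = sup_{x ∈ A} min_{1≤i≤N} d(x, x_i), and γ = f* − ℓ. Then every x ∈ A satisfies f(x) ≥ f* − ε. -/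
/-! Let `x_i` be the sample nearest to an active point `x`. The envelope at `x_i`, the good event
at `x_i` and the Lipschitz bound from `x_i` to `x` each lose one `r_i` or one `L d(x, x_i)`, so
`ℓ ≤ U(x) ≤ f(x) + 2 r_i + 2 L d(x, x_i)` and `f* - f(x) ≤ γ + 2(β + L η) ≤ ε`. -/

section LipschitzUCB

variable {X : Type*} [MetricSpace X] {N : ℕ} {L : ℝ} {xs : Fin N → X} {μ r : Fin N → ℝ}

theorem lipUCB_le (x : X) (i : Fin N) : lipUCB L xs μ r x ≤ μ i + r i + L * dist x (xs i) :=
  ciInf_le (Finite.bddBelow_range _) i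

theorem lowerCert_le_of_mem_activeSet {f : X → ℝ} (hf : ∀ x y, |f x - f y| ≤ L * dist x y)
    (hgood : ∀ i, |μ i - f (xs i)| ≤ r i) {x : X} (hx : x ∈ activeSet L xs μ r) (i : Fin N) :
    lowerCert μ r ≤ f x + 2 * r i + 2 * (L * dist x (xs i)) := by
  have hμ : μ i ≤ f (xs i) + r i := by linarith [(abs_le.mp (hgood i)).2]
  have hLip : f (xs i) ≤ f x + L * dist x (xs i) := by linarith [(abs_le.mp (hf x (xs i))).1]
  calc lowerCert μ r ≤ lipUCB L xs μ r x := hx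
    _ ≤ μ i + r i + L * dist x (xs i) := lipUCB_le x i
    _ ≤ f x + 2 * r i + 2 * (L * dist x (xs i)) := by linarith

theorem exists_dist_le_of_mem_activeSet [NeZero N] {η : ℝ}
    (hη : η ∈ upperBounds ((fun x => ⨅ i, dist x (xs i)) '' activeSet L xs μ r))
    {x : X} (hx : x ∈ activeSet L xs μ r) : ∃ i, dist x (xs i) ≤ η := by
  obtain ⟨i, hi⟩ := exists_eq_ciInf_of_finite (f := fun i => dist x (xs i))
  exact ⟨i, hi ▸ hη ⟨x, hx, rfl⟩⟩

end LipschitzUCB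

theorem eps_optimality_condition_general {X : Type*} [MetricSpace X]
    {L : ℝ} (hL : 0 < L) {f : X → ℝ}
    (hf : ∀ x y, |f x - f y| ≤ L * dist x y)
    {N : ℕ} (hN : 1 ≤ N) (xs : Fin N → X) (μ r : Fin N → ℝ)
    (hgood : ∀ i, |μ i - f (xs i)| ≤ r i)
    (xstar : X)
    (ε : ℝ)
    (β : ℝ) (hβ : β = ⨆ i, r i) (hβε : β ≤ ε / 6)
    (η : ℝ)
    (hη : IsLUB ((fun x => ⨅ i, dist x (xs i)) '' activeSet L xs μ r) η)
    (hηε : η ≤ ε / (6 * L))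
    (hγε : f xstar - lowerCert μ r ≤ ε / 3) :
    ∀ x ∈ activeSet L xs μ r, f xstar - ε ≤ f x := by
  intro x hx
  have : NeZero N := ⟨by omega⟩
  obtain ⟨i, hdist⟩ := exists_dist_le_of_mem_activeSet hη.1 hx
  have hrβ : r i ≤ β := hβ ▸ le_ciSup (Finite.bddAbove_range r) i
  have hLdist : L * dist x (xs i) ≤ ε / 6 :=
    calc L * dist x (xs i) ≤ L * (ε / (6 * L)) := by gcongr; exact hdist.trans hηε
      _ = ε / 6 := by field_simp
  linarith [lowerCert_le_of_mem_activeSet hf hgood hx i]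

/-- ε-optimality condition: if `β ≤ ε/6`, `η ≤ ε/(6L)` and `γ ≤ ε/3`, then
every point of the active set is ε-near-optimal. -/
theorem eps_optimality_condition {X : Type*} [MetricSpace X]
    {L : ℝ} (hL : 0 < L) {f : X → ℝ}
    (hf : ∀ x y, |f x - f y| ≤ L * dist x y)
    {N : ℕ} (hN : 1 ≤ N) (xs : Fin N → X) (μ r : Fin N → ℝ)
    (hr : ∀ i, 0 ≤ r i)
    (hgood : ∀ i, |μ i - f (xs i)| ≤ r i)
    (xstar : X) (hopt : ∀ y : X, f y ≤ f xstar)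
    (ε : ℝ) (hε : 0 < ε)
    (β : ℝ) (hβ : β = ⨆ i, r i) (hβε : β ≤ ε / 6)
    (η : ℝ)
    (hη : IsLUB ((fun x => ⨅ i, dist x (xs i)) '' activeSet L xs μ r) η)
    (hηε : η ≤ ε / (6 * L))
    (hγε : f xstar - lowerCert μ r ≤ ε / 3) :
    ∀ x ∈ activeSet L xs μ r, f xstar - ε ≤ f x :=
  eps_optimality_condition_general hL hf hN xs μ r hgood xstar ε β hβ hβε η hη hηε hγε
end
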